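/- arXiv:2110.04365 — 2 statements merged into one kernel-verified Lean document; each statement's English description precedes it below -/
import Mathlib

section
/- In the AHK setup on n ≥ 3 nodes, assume that E[Z₁₂] = 0 and E[Z₁₂²] < ∞, and define the Hájek projection terms W_l := Σ_{j≠l} E[Z_{lj} | σ(U_l)] + Σ_{i≠l} E[Z_{il} | σ(U_l)] for l = 1,…,n. Then W₁,…,W_n are mutually independent, and Var( Σ_{l=1}^n W_l ) = n(n−1)(n−2)·( E[Z₁₂Z₁₃] + E[Z₂₁Z₃₁] + 2·E[Z₁₂Z₃₁] ) + n(n−1)·( E[(E[Z₁₂ | σ(U₁)])²] + E[(E[Z₂₁ | σ(U₁)])²] + 2·E[ E[Z₁₂ | σ(U₁)] · E[Z₂₁ | σ(U₁)] ] ). -/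
/-!
Conditioning on `U l` freezes the first argument of every `Z l j` and the second of every
`Z j l`, because `U l` is independent of `(U j, V {l,j})`: almost surely
`E[Z l j | U l] = g₁ (U l)` and `E[Z j l | U l] = g₂ (U l)`, where `g₁ u = E τ(u, U', V')`
and `g₂ u = E τ(U', u, V')`. So `W l = (n - 1) (g₁ + g₂)(U l)` is a function of `U l` alone;
the `W l` are independent, and `Var (∑ W l) = n (n - 1)² E[(g₁ + g₂)(U 1)²]`, the mean
vanishing because `E Z 1 2 = E Z 2 1 = 0`. Given `U 1`, the variables `Z 1 2` and `Z 1 3` are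
independent, so `E[Z 1 2 Z 1 3] = E[g₁(U 1)²]`, and likewise for the two other cross moments.
Both brackets of the formula thus equal `E[(g₁ + g₂)(U 1)²]`, and
`n (n - 1)(n - 2) + n (n - 1) = n (n - 1)²`.
-/

open MeasureTheory ProbabilityTheory
open Function (swap)

section Independence

variable {Ω : Type*} {mΩ : MeasurableSpace Ω} {P : Measure Ω}
  {β γ γ' : Type*} [MeasurableSpace β] [MeasurableSpace γ] [MeasurableSpace γ']

theorem ProbabilityTheory.iIndep.indepFun_of_measurable_biSup {ι : Type*}
    {m : ι → MeasurableSpace Ω} (h : iIndep m P) (hm : ∀ i, m i ≤ mΩ) {s t : Set ι}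
    (hst : Disjoint s t) {X : Ω → β} {Y : Ω → γ} (hX : Measurable[⨆ i ∈ s, m i] X)
    (hY : Measurable[⨆ i ∈ t, m i] Y) : IndepFun X Y P :=
  indep_of_indep_of_le_left
    (indep_of_indep_of_le_right (indep_iSup_of_disjoint hm h hst) hY.comap_le) hX.comap_le

theorem integral_mul_congr_ae {f f' g g' : Ω → ℝ} (hf : f =ᵐ[P] f') (hg : g =ᵐ[P] g') :
    ∫ ω, f ω * g ω ∂P = ∫ ω, f' ω * g' ω ∂P :=
  integral_congr_ae (hf.mul hg)

variable [IsProbabilityMeasure P] {X : Ω → β} {Y : Ω → γ}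

/-- The freezing lemma. -/
theorem condExp_comp_prodMk_ae_eq_integral (hX : Measurable X) (hY : Measurable Y)
    (hXY : IndepFun X Y P) {φ : β × γ → ℝ} (hφ : Measurable φ)
    (hint : Integrable (fun ω => φ (X ω, Y ω)) P) :
    P[fun ω => φ (X ω, Y ω) | MeasurableSpace.comap X inferInstance]
      =ᵐ[P] fun ω => ∫ y, φ (X ω, y) ∂(P.map Y) := by
  have hm := hX.comap_le
  have hmap : P.map (fun ω => (X ω, Y ω)) = (P.map X).prod (P.map Y) :=
    (indepFun_iff_map_prod_eq_prod_map_map hX.aemeasurable hY.aemeasurable).mp hXY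
  have hXY_meas : Measurable fun ω => (X ω, Y ω) := hX.prodMk hY
  have hφint : Integrable φ ((P.map X).prod (P.map Y)) := by
    rw [← hmap]
    exact (integrable_map_measure hφ.aestronglyMeasurable hXY_meas.aemeasurable).mpr hint
  set g : β → ℝ := fun x => ∫ y, φ (x, y) ∂(P.map Y)
  have hg : StronglyMeasurable g := hφ.stronglyMeasurable.integral_prod_right'
  have hgX_int : Integrable (fun ω => g (X ω)) P :=
    (integrable_map_measure hg.aestronglyMeasurable hX.aemeasurable).mp
      hφint.integral_prod_left
  refine (ae_eq_condExp_of_forall_setIntegral_eq hm hint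
    (fun s _ _ => hgX_int.integrableOn) (fun s hs _ => ?_)
    (hg.comp_measurable (comap_measurable X)).aestronglyMeasurable).symm
  obtain ⟨A, hA, rfl⟩ := hs
  calc ∫ ω in X ⁻¹' A, g (X ω) ∂P
      = ∫ x in A, g x ∂(P.map X) :=
        (setIntegral_map hA hg.aestronglyMeasurable hX.aemeasurable).symm
    _ = ∫ z in A ×ˢ Set.univ, φ z ∂((P.map X).prod (P.map Y)) := by
        rw [setIntegral_prod _ hφint.integrableOn, Measure.restrict_univ]
    _ = ∫ ω in X ⁻¹' A, φ (X ω, Y ω) ∂P := by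
        rw [← hmap, setIntegral_map (hA.prod MeasurableSet.univ) hφ.aestronglyMeasurable
          hXY_meas.aemeasurable, Set.mk_preimage_prod, Set.preimage_univ, Set.inter_univ]

theorem integral_mul_comp_prodMk_eq_integral {Y' : Ω → γ'} (hX : Measurable X)
    (hY : Measurable Y) (hY' : Measurable Y') (hXY : IndepFun X (fun ω => (Y ω, Y' ω)) P)
    (hYY' : IndepFun Y Y' P) {F : β × γ → ℝ} {G : β × γ' → ℝ} (hF : Measurable F)
    (hG : Measurable G) (hint : Integrable (fun ω => F (X ω, Y ω) * G (X ω, Y' ω)) P) :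
    ∫ ω, F (X ω, Y ω) * G (X ω, Y' ω) ∂P
      = ∫ ω, (∫ y, F (X ω, y) ∂(P.map Y)) * ∫ y, G (X ω, y) ∂(P.map Y') ∂P := by
  have hFG : Measurable fun q : β × γ × γ' => F (q.1, q.2.1) * G (q.1, q.2.2) := by fun_prop
  rw [← integral_condExp hX.comap_le]
  refine integral_congr_ae ((condExp_comp_prodMk_ae_eq_integral hX (hY.prodMk hY') hXY hFG
    hint).mono fun ω hω => ?_)
  rw [hω, (indepFun_iff_map_prod_eq_prod_map_map hY.aemeasurable hY'.aemeasurable).mp hYY']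
  exact integral_prod_mul (fun y => F (X ω, y)) (fun y => G (X ω, y))

end Independence

section AHK

variable {Ω S T ι κ : Type*} {mΩ : MeasurableSpace Ω} [MeasurableSpace S] [MeasurableSpace T]

abbrev ahkSigma (U : ι → Ω → S) (V : κ → Ω → T) : ι ⊕ κ → MeasurableSpace Ω :=
  Sum.elim (fun i => MeasurableSpace.comap (U i) inferInstance)
    (fun e => MeasurableSpace.comap (V e) inferInstance)

structure IsAHKModel (P : Measure Ω) (μ : Measure S) (ν : Measure T) (U : ι → Ω → S)
    (V : κ → Ω → T) : Prop where
  measurable_U : ∀ i, Measurable (U i)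
  measurable_V : ∀ e, Measurable (V e)
  map_U : ∀ i, P.map (U i) = μ
  map_V : ∀ e, P.map (V e) = ν
  iIndep : iIndep (ahkSigma U V) P

variable {U : ι → Ω → S} {V : κ → Ω → T} {a b c d : ι} {e e' : κ}
  {s : Set (ι ⊕ κ)}

theorem measurable_U_biSup_ahkSigma (ha : Sum.inl a ∈ s) :
    Measurable[⨆ k ∈ s, ahkSigma U V k] (U a) :=
  Measurable.of_comap_le (le_biSup (ahkSigma U V) ha)

theorem measurable_V_biSup_ahkSigma (he : Sum.inr e ∈ s) :
    Measurable[⨆ k ∈ s, ahkSigma U V k] (V e) :=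
  Measurable.of_comap_le (le_biSup (ahkSigma U V) he)

theorem measurable_prodMk_biSup_ahkSigma (ha : Sum.inl a ∈ s) (he : Sum.inr e ∈ s) :
    Measurable[⨆ k ∈ s, ahkSigma U V k] fun ω => (U a ω, V e ω) :=
  (measurable_U_biSup_ahkSigma ha).prodMk (measurable_V_biSup_ahkSigma he)

namespace IsAHKModel

variable {P : Measure Ω} {μ : Measure S} {ν : Measure T}

theorem indepFun_of_disjoint {β γ : Type*} [MeasurableSpace β] [MeasurableSpace γ]
    (hM : IsAHKModel P μ ν U V) {t : Set (ι ⊕ κ)} (hst : Disjoint s t) {X : Ω → β}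
    {Y : Ω → γ} (hX : Measurable[⨆ k ∈ s, ahkSigma U V k] X)
    (hY : Measurable[⨆ k ∈ t, ahkSigma U V k] Y) : IndepFun X Y P :=
  hM.iIndep.indepFun_of_measurable_biSup
    (Sum.rec (fun i => (hM.measurable_U i).comap_le) (fun e => (hM.measurable_V e).comap_le))
    hst hX hY

theorem indepFun_U_V (hM : IsAHKModel P μ ν U V) : IndepFun (U a) (V e) P :=
  hM.indepFun_of_disjoint (s := {.inl a}) (t := {.inr e}) (by simp)
    (measurable_U_biSup_ahkSigma rfl) (measurable_V_biSup_ahkSigma rfl)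

theorem indepFun_U_prodMk (hM : IsAHKModel P μ ν U V) (hab : a ≠ b) :
    IndepFun (U a) (fun ω => (U b ω, V e ω)) P :=
  hM.indepFun_of_disjoint (s := {.inl a}) (t := {.inl b, .inr e}) (by simp [hab])
    (measurable_U_biSup_ahkSigma rfl) (measurable_prodMk_biSup_ahkSigma (by simp) (by simp))

theorem indepFun_U_prodMk_prodMk (hM : IsAHKModel P μ ν U V) (hab : a ≠ b) (hac : a ≠ c) :
    IndepFun (U a) (fun ω => ((U b ω, V e ω), (U c ω, V e' ω))) P :=
  hM.indepFun_of_disjoint (s := {.inl a}) (t := {.inl b, .inr e, .inl c, .inr e'})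
    (by simp [hab, hac]) (measurable_U_biSup_ahkSigma rfl)
    ((measurable_prodMk_biSup_ahkSigma (by simp) (by simp)).prodMk
      (measurable_prodMk_biSup_ahkSigma (by simp) (by simp)))

theorem indepFun_prodMk_prodMk (hM : IsAHKModel P μ ν U V) (hbc : b ≠ c) (hee' : e ≠ e') :
    IndepFun (fun ω => (U b ω, V e ω)) (fun ω => (U c ω, V e' ω)) P :=
  hM.indepFun_of_disjoint (s := {.inl b, .inr e}) (t := {.inl c, .inr e'})
    (by simp [hbc.symm, hee'.symm]) (measurable_prodMk_biSup_ahkSigma (by simp) (by simp))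
    (measurable_prodMk_biSup_ahkSigma (by simp) (by simp))

theorem identDistrib_U (hM : IsAHKModel P μ ν U V) (a b : ι) : IdentDistrib (U a) (U b) P P :=
  ⟨(hM.measurable_U a).aemeasurable, (hM.measurable_U b).aemeasurable,
    by rw [hM.map_U, hM.map_U]⟩

variable [IsProbabilityMeasure P]

theorem map_prodMk (hM : IsAHKModel P μ ν U V) :
    P.map (fun ω => (U b ω, V e ω)) = μ.prod ν := by
  rw [(indepFun_iff_map_prod_eq_prod_map_map (hM.measurable_U b).aemeasurable
    (hM.measurable_V e).aemeasurable).mp hM.indepFun_U_V, hM.map_U, hM.map_V]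

theorem map_triple (hM : IsAHKModel P μ ν U V) (hab : a ≠ b) :
    P.map (fun ω => (U a ω, U b ω, V e ω)) = μ.prod (μ.prod ν) := by
  rw [(indepFun_iff_map_prod_eq_prod_map_map (hM.measurable_U a).aemeasurable
    ((hM.measurable_U b).prodMk (hM.measurable_V e)).aemeasurable).mp
    (hM.indepFun_U_prodMk hab), hM.map_U, hM.map_prodMk]

theorem identDistrib_triple (hM : IsAHKModel P μ ν U V) (hab : a ≠ b) (hcd : c ≠ d) :
    IdentDistrib (fun ω => (U a ω, U b ω, V e ω)) (fun ω => (U c ω, U d ω, V e' ω)) P P :=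
  ⟨((hM.measurable_U a).prodMk ((hM.measurable_U b).prodMk (hM.measurable_V e))).aemeasurable,
    ((hM.measurable_U c).prodMk ((hM.measurable_U d).prodMk (hM.measurable_V e'))).aemeasurable,
    by rw [hM.map_triple hab, hM.map_triple hcd]⟩

end IsAHKModel

variable {P : Measure Ω} [IsProbabilityMeasure P] {μ : Measure S} {ν : Measure T}
  {τ τ' : S → S → T → ℝ}

noncomputable def hajekKernel (μ : Measure S) (ν : Measure T) (τ : S → S → T → ℝ)
    (u : S) : ℝ :=
  ∫ p, τ u p.1 p.2 ∂(μ.prod ν)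

theorem measurable_hajekKernel [SFinite μ] [SFinite ν]
    (hτ : Measurable fun q : S × S × T => τ q.1 q.2.1 q.2.2) :
    Measurable (hajekKernel μ ν τ) :=
  hτ.stronglyMeasurable.integral_prod_right'.measurable

namespace IsAHKModel

theorem condExp_ae_eq_hajekKernel (hM : IsAHKModel P μ ν U V)
    (hτ : Measurable fun q : S × S × T => τ q.1 q.2.1 q.2.2) (hab : a ≠ b)
    (hint : Integrable (fun ω => τ (U a ω) (U b ω) (V e ω)) P) :
    P[fun ω => τ (U a ω) (U b ω) (V e ω) | MeasurableSpace.comap (U a) inferInstance]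
      =ᵐ[P] fun ω => hajekKernel μ ν τ (U a ω) := by
  have h := condExp_comp_prodMk_ae_eq_integral (hM.measurable_U a)
    ((hM.measurable_U b).prodMk (hM.measurable_V e)) (hM.indepFun_U_prodMk hab) hτ hint
  rwa [hM.map_prodMk] at h

theorem integral_mul_eq_integral_hajekKernel_mul (hM : IsAHKModel P μ ν U V)
    (hτ : Measurable fun q : S × S × T => τ q.1 q.2.1 q.2.2)
    (hτ' : Measurable fun q : S × S × T => τ' q.1 q.2.1 q.2.2)
    (hab : a ≠ b) (hac : a ≠ c) (hbc : b ≠ c) (hee' : e ≠ e')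
    (hint : Integrable
      (fun ω => τ (U a ω) (U b ω) (V e ω) * τ' (U a ω) (U c ω) (V e' ω)) P) :
    ∫ ω, τ (U a ω) (U b ω) (V e ω) * τ' (U a ω) (U c ω) (V e' ω) ∂P
      = ∫ ω, hajekKernel μ ν τ (U a ω) * hajekKernel μ ν τ' (U a ω) ∂P := by
  have h := integral_mul_comp_prodMk_eq_integral (hM.measurable_U a)
    ((hM.measurable_U b).prodMk (hM.measurable_V e))
    ((hM.measurable_U c).prodMk (hM.measurable_V e'))
    (hM.indepFun_U_prodMk_prodMk hab hac) (hM.indepFun_prodMk_prodMk hbc hee') hτ hτ' hint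
  rwa [hM.map_prodMk, hM.map_prodMk] at h

end IsAHKModel

end AHK

section HajekTerm

variable {Ω S T ι κ : Type*} [Fintype ι] [DecidableEq ι] {mΩ : MeasurableSpace Ω}
  [MeasurableSpace S] [MeasurableSpace T] {P : Measure Ω} {U : ι → Ω → S}
  {Z : ι → ι → Ω → ℝ}

noncomputable def hajekTerm (P : Measure Ω) (U : ι → Ω → S) (Z : ι → ι → Ω → ℝ)
    (l : ι) : Ω → ℝ :=
  fun ω => (∑ j ∈ Finset.univ.erase l,
      (P[Z l j | MeasurableSpace.comap (U l) inferInstance]) ω)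
    + ∑ i ∈ Finset.univ.erase l, (P[Z i l | MeasurableSpace.comap (U l) inferInstance]) ω

theorem measurable_hajekTerm (l : ι) :
    Measurable[MeasurableSpace.comap (U l) inferInstance] (hajekTerm P U Z l) :=
  (Finset.measurable_sum _ fun _ _ => stronglyMeasurable_condExp.measurable).add
    (Finset.measurable_sum _ fun _ _ => stronglyMeasurable_condExp.measurable)

theorem memLp_hajekTerm (hL2 : ∀ i j, i ≠ j → MemLp (Z i j) 2 P) (l : ι) :
    MemLp (hajekTerm P U Z l) 2 P :=
  (memLp_finsetSum (Finset.univ.erase l)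
      (f := fun j => P[Z l j | MeasurableSpace.comap (U l) inferInstance])
      fun j hj => (hL2 l j (Finset.ne_of_mem_erase hj).symm).condExp one_le_two).add
    (memLp_finsetSum (Finset.univ.erase l)
      (f := fun i => P[Z i l | MeasurableSpace.comap (U l) inferInstance])
      fun i hi => (hL2 i l (Finset.ne_of_mem_erase hi)).condExp one_le_two)

theorem IsAHKModel.iIndepFun_hajekTerm {μ : Measure S} {ν : Measure T} {V : κ → Ω → T}
    (hM : IsAHKModel P μ ν U V) : iIndepFun (hajekTerm P U Z) P := by
  rw [iIndepFun_iff_iIndep]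
  exact iIndep_of_iIndep_of_le (hM.iIndep.precomp Sum.inl_injective)
    fun l => (measurable_hajekTerm l).comap_le

end HajekTerm

section DyadicArray

variable {Ω S T ι : Type*} {U : ι → Ω → S} {V : {e : Sym2 ι // ¬ e.IsDiag} → Ω → T}
  {τ : S → S → T → ℝ} {Z : ι → ι → Ω → ℝ} {i j k : ι}

def edge (h : i ≠ j) : {e : Sym2 ι // ¬ e.IsDiag} :=
  ⟨s(i, j), mt Sym2.mk_isDiag_iff.mp h⟩

theorem edge_comm (h : i ≠ j) : edge h.symm = edge h :=
  Subtype.ext Sym2.eq_swap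

theorem edge_ne_edge (hij : i ≠ j) (hik : i ≠ k) (hjk : j ≠ k) : edge hij ≠ edge hik :=
  fun h => hjk (Sym2.congr_right.mp (congrArg Subtype.val h))

def IsDyadicArray (U : ι → Ω → S) (V : {e : Sym2 ι // ¬ e.IsDiag} → Ω → T)
    (τ : S → S → T → ℝ) (Z : ι → ι → Ω → ℝ) : Prop :=
  ∀ i j (h : i ≠ j), Z i j = fun ω => τ (U i ω) (U j ω) (V (edge h) ω)

theorem IsDyadicArray.transpose (hZ : IsDyadicArray U V τ Z) (h : i ≠ j) :
    Z j i = fun ω => swap τ (U i ω) (U j ω) (V (edge h) ω) := by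
  rw [hZ j i h.symm, edge_comm]

variable {mΩ : MeasurableSpace Ω} [MeasurableSpace S] [MeasurableSpace T]
  {P : Measure Ω} [IsProbabilityMeasure P] {μ : Measure S} {ν : Measure T} {a b : ι}

theorem measurable_uncurry_swap (hτ : Measurable fun q : S × S × T => τ q.1 q.2.1 q.2.2) :
    Measurable fun q : S × S × T => swap τ q.1 q.2.1 q.2.2 :=
  hτ.comp (measurable_snd.fst.prodMk (measurable_fst.prodMk measurable_snd.snd))

namespace IsDyadicArray

theorem identDistrib (hZ : IsDyadicArray U V τ Z) (hM : IsAHKModel P μ ν U V)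
    (hτ : Measurable fun q : S × S × T => τ q.1 q.2.1 q.2.2) {k l : ι} (hij : i ≠ j)
    (hkl : k ≠ l) : IdentDistrib (Z i j) (Z k l) P P := by
  rw [hZ i j hij, hZ k l hkl]
  exact (hM.identDistrib_triple hij hkl).comp hτ

theorem condExp_ae_eq (hZ : IsDyadicArray U V τ Z) (hM : IsAHKModel P μ ν U V)
    (hτ : Measurable fun q : S × S × T => τ q.1 q.2.1 q.2.2) (h : i ≠ j)
    (hint : Integrable (Z i j) P) :
    P[Z i j | MeasurableSpace.comap (U i) inferInstance]
      =ᵐ[P] fun ω => hajekKernel μ ν τ (U i ω) := by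
  rw [hZ i j h] at hint ⊢
  exact hM.condExp_ae_eq_hajekKernel hτ h hint

theorem condExp_transpose_ae_eq (hZ : IsDyadicArray U V τ Z) (hM : IsAHKModel P μ ν U V)
    (hτ : Measurable fun q : S × S × T => τ q.1 q.2.1 q.2.2) (h : i ≠ j)
    (hint : Integrable (Z j i) P) :
    P[Z j i | MeasurableSpace.comap (U i) inferInstance]
      =ᵐ[P] fun ω => hajekKernel μ ν (swap τ) (U i ω) := by
  rw [hZ.transpose h] at hint ⊢
  exact hM.condExp_ae_eq_hajekKernel (measurable_uncurry_swap hτ) h hint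

theorem integral_mul_row (hZ : IsDyadicArray U V τ Z) (hM : IsAHKModel P μ ν U V)
    (hτ : Measurable fun q : S × S × T => τ q.1 q.2.1 q.2.2)
    (hL2 : ∀ i j, i ≠ j → MemLp (Z i j) 2 P) (hij : i ≠ j) (hik : i ≠ k) (hjk : j ≠ k) :
    ∫ ω, Z i j ω * Z i k ω ∂P = ∫ ω, hajekKernel μ ν τ (U i ω) ^ 2 ∂P := by
  have hint := (hL2 i j hij).integrable_mul (hL2 i k hik)
  rw [hZ i j hij, hZ i k hik] at hint ⊢
  simp_rw [sq]
  exact hM.integral_mul_eq_integral_hajekKernel_mul hτ hτ hij hik hjk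
    (edge_ne_edge hij hik hjk) hint

theorem integral_mul_col (hZ : IsDyadicArray U V τ Z) (hM : IsAHKModel P μ ν U V)
    (hτ : Measurable fun q : S × S × T => τ q.1 q.2.1 q.2.2)
    (hL2 : ∀ i j, i ≠ j → MemLp (Z i j) 2 P) (hij : i ≠ j) (hik : i ≠ k) (hjk : j ≠ k) :
    ∫ ω, Z j i ω * Z k i ω ∂P = ∫ ω, hajekKernel μ ν (swap τ) (U i ω) ^ 2 ∂P := by
  have hint := (hL2 j i hij.symm).integrable_mul (hL2 k i hik.symm)
  rw [hZ.transpose hij, hZ.transpose hik] at hint ⊢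
  simp_rw [sq]
  exact hM.integral_mul_eq_integral_hajekKernel_mul (measurable_uncurry_swap hτ)
    (measurable_uncurry_swap hτ) hij hik hjk (edge_ne_edge hij hik hjk) hint

theorem integral_mul_row_col (hZ : IsDyadicArray U V τ Z) (hM : IsAHKModel P μ ν U V)
    (hτ : Measurable fun q : S × S × T => τ q.1 q.2.1 q.2.2)
    (hL2 : ∀ i j, i ≠ j → MemLp (Z i j) 2 P) (hij : i ≠ j) (hik : i ≠ k) (hjk : j ≠ k) :
    ∫ ω, Z i j ω * Z k i ω ∂P
      = ∫ ω, hajekKernel μ ν τ (U i ω) * hajekKernel μ ν (swap τ) (U i ω) ∂P := by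
  have hint := (hL2 i j hij).integrable_mul (hL2 k i hik.symm)
  rw [hZ i j hij, hZ.transpose hik] at hint ⊢
  exact hM.integral_mul_eq_integral_hajekKernel_mul hτ (measurable_uncurry_swap hτ)
    hij hik hjk (edge_ne_edge hij hik hjk) hint

theorem variance_hajekKernel_add (hZ : IsDyadicArray U V τ Z) (hM : IsAHKModel P μ ν U V)
    (hτ : Measurable fun q : S × S × T => τ q.1 q.2.1 q.2.2)
    (hL2 : ∀ i j, i ≠ j → MemLp (Z i j) 2 P)
    (hmean : ∀ i j, i ≠ j → ∫ ω, Z i j ω ∂P = 0) (hab : a ≠ b) :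
    variance (fun ω => hajekKernel μ ν τ (U a ω) + hajekKernel μ ν (swap τ) (U a ω)) P
      = ∫ ω, hajekKernel μ ν τ (U a ω) ^ 2 ∂P
      + ∫ ω, hajekKernel μ ν (swap τ) (U a ω) ^ 2 ∂P
      + 2 * ∫ ω, hajekKernel μ ν τ (U a ω) * hajekKernel μ ν (swap τ) (U a ω) ∂P := by
  have hm := (hM.measurable_U a).comap_le
  have hrow := hZ.condExp_ae_eq hM hτ hab ((hL2 a b hab).integrable one_le_two)
  have hcol := hZ.condExp_transpose_ae_eq hM hτ hab ((hL2 b a hab.symm).integrable one_le_two)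
  have hrowL2 := ((hL2 a b hab).condExp (m := MeasurableSpace.comap (U a) inferInstance)
    one_le_two).ae_eq hrow
  have hcolL2 := ((hL2 b a hab.symm).condExp (m := MeasurableSpace.comap (U a) inferInstance)
    one_le_two).ae_eq hcol
  have hrow0 : ∫ ω, hajekKernel μ ν τ (U a ω) ∂P = 0 := by
    rw [← integral_congr_ae hrow, integral_condExp hm, hmean a b hab]
  have hcol0 : ∫ ω, hajekKernel μ ν (swap τ) (U a ω) ∂P = 0 := by
    rw [← integral_congr_ae hcol, integral_condExp hm, hmean b a hab.symm]
  rw [variance_fun_add hrowL2 hcolL2, covariance_eq_sub hrowL2 hcolL2,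
    variance_of_integral_eq_zero hrowL2.aemeasurable hrow0,
    variance_of_integral_eq_zero hcolL2.aemeasurable hcol0, hrow0, hcol0]
  simp only [Pi.mul_apply, mul_zero, sub_zero]
  ring

section Fintype

variable [Fintype ι] [DecidableEq ι]

theorem hajekTerm_ae_eq (hZ : IsDyadicArray U V τ Z) (hM : IsAHKModel P μ ν U V)
    (hτ : Measurable fun q : S × S × T => τ q.1 q.2.1 q.2.2)
    (hL2 : ∀ i j, i ≠ j → MemLp (Z i j) 2 P) (l : ι) :
    hajekTerm P U Z l =ᵐ[P] fun ω => ((Fintype.card ι : ℝ) - 1) *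
      (hajekKernel μ ν τ (U l ω) + hajekKernel μ ν (swap τ) (U l ω)) := by
  have hrow : ∀ᵐ ω ∂P, ∀ j ∈ Finset.univ.erase l,
      (P[Z l j | MeasurableSpace.comap (U l) inferInstance]) ω
        = hajekKernel μ ν τ (U l ω) := by
    refine Filter.eventually_all_finset _ |>.mpr fun j hj => ?_
    have hlj := (Finset.ne_of_mem_erase hj).symm
    exact hZ.condExp_ae_eq hM hτ hlj ((hL2 l j hlj).integrable one_le_two)
  have hcol : ∀ᵐ ω ∂P, ∀ i ∈ Finset.univ.erase l,
      (P[Z i l | MeasurableSpace.comap (U l) inferInstance]) ω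
        = hajekKernel μ ν (swap τ) (U l ω) := by
    refine Filter.eventually_all_finset _ |>.mpr fun i hi => ?_
    have hli := (Finset.ne_of_mem_erase hi).symm
    exact hZ.condExp_transpose_ae_eq hM hτ hli ((hL2 i l hli.symm).integrable one_le_two)
  filter_upwards [hrow, hcol] with ω hr hc
  rw [hajekTerm, Finset.sum_congr rfl hr, Finset.sum_congr rfl hc, Finset.sum_const,
    Finset.sum_const, Finset.card_erase_of_mem (Finset.mem_univ l), Finset.card_univ,
    nsmul_eq_mul, nsmul_eq_mul, Nat.cast_pred (Fintype.card_pos_iff.mpr ⟨l⟩)]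
  ring

theorem variance_sum_hajekTerm [SFinite μ] [SFinite ν] (hZ : IsDyadicArray U V τ Z)
    (hM : IsAHKModel P μ ν U V) (hτ : Measurable fun q : S × S × T => τ q.1 q.2.1 q.2.2)
    (hL2 : ∀ i j, i ≠ j → MemLp (Z i j) 2 P) (a : ι) :
    variance (fun ω => ∑ l, hajekTerm P U Z l ω) P
      = Fintype.card ι * (((Fintype.card ι : ℝ) - 1) ^ 2 * variance
          (fun ω => hajekKernel μ ν τ (U a ω) + hajekKernel μ ν (swap τ) (U a ω)) P) := by
  have hG : Measurable fun u => hajekKernel μ ν τ u + hajekKernel μ ν (swap τ) u :=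
    (measurable_hajekKernel hτ).add (measurable_hajekKernel (measurable_uncurry_swap hτ))
  have hvar : ∀ l, variance (hajekTerm P U Z l) P = ((Fintype.card ι : ℝ) - 1) ^ 2 * variance
      (fun ω => hajekKernel μ ν τ (U a ω) + hajekKernel μ ν (swap τ) (U a ω)) P := by
    intro l
    rw [variance_congr (hZ.hajekTerm_ae_eq hM hτ hL2 l), variance_const_mul]
    exact congrArg _ ((hM.identDistrib_U l a).comp hG).variance_eq
  rw [← Finset.sum_fn, IndepFun.variance_sum (fun l _ => memLp_hajekTerm hL2 l)
      fun k _ l _ hkl => hM.iIndepFun_hajekTerm.indepFun hkl,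
    Finset.sum_congr rfl fun l _ => hvar l, Finset.sum_const, Finset.card_univ, nsmul_eq_mul]

end Fintype

end IsDyadicArray

end DyadicArray

theorem dyadic_hajek_projection_variance_general
    {Ω S T : Type*} [MeasurableSpace Ω] [MeasurableSpace S] [MeasurableSpace T]
    (P : Measure Ω) [IsProbabilityMeasure P]
    {n : ℕ}
    (U : Fin n → Ω → S)
    (V : {e : Sym2 (Fin n) // ¬ e.IsDiag} → Ω → T)
    (hU : ∀ i, Measurable (U i)) (hV : ∀ e, Measurable (V e))
    (hUid : ∀ i j, IdentDistrib (U i) (U j) P P)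
    (hVid : ∀ e e', IdentDistrib (V e) (V e') P P)
    (hindep : iIndep
      (Sum.elim (fun i => MeasurableSpace.comap (U i) inferInstance)
                (fun e => MeasurableSpace.comap (V e) inferInstance)
        : Fin n ⊕ {e : Sym2 (Fin n) // ¬ e.IsDiag} → MeasurableSpace Ω) P)
    (τ : S → S → T → ℝ)
    (hτ : Measurable fun q : S × S × T => τ q.1 q.2.1 q.2.2)
    (Z : Fin n → Fin n → Ω → ℝ)
    (hZ : ∀ i j : Fin n, ∀ hij : i ≠ j,
      Z i j = fun ω => τ (U i ω) (U j ω)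
        (V ⟨Sym2.mk i j, mt Sym2.mk_isDiag_iff.mp hij⟩ ω))
    (i0 i1 i2 : Fin n)
    (h0 : (i0 : ℕ) = 0) (h1 : (i1 : ℕ) = 1) (h2 : (i2 : ℕ) = 2)
    (hmean : ∫ ω, Z i0 i1 ω ∂P = 0)
    (hL2 : MemLp (Z i0 i1) 2 P)
    (W : Fin n → Ω → ℝ)
    (hW : ∀ l : Fin n, W l = fun ω =>
      (∑ j ∈ Finset.univ.erase l,
        (P[Z l j | MeasurableSpace.comap (U l) inferInstance]) ω)
      + ∑ i ∈ Finset.univ.erase l,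
        (P[Z i l | MeasurableSpace.comap (U l) inferInstance]) ω) :
    iIndepFun W P
    ∧ variance (fun ω => ∑ l : Fin n, W l ω) P
      = (n : ℝ) * ((n : ℝ) - 1) * ((n : ℝ) - 2) *
          ((∫ ω, Z i0 i1 ω * Z i0 i2 ω ∂P) + (∫ ω, Z i1 i0 ω * Z i2 i0 ω ∂P)
            + 2 * ∫ ω, Z i0 i1 ω * Z i2 i0 ω ∂P)
        + (n : ℝ) * ((n : ℝ) - 1) *
          ((∫ ω, ((P[Z i0 i1 | MeasurableSpace.comap (U i0) inferInstance]) ω) ^ 2 ∂P)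
            + (∫ ω, ((P[Z i1 i0 | MeasurableSpace.comap (U i0) inferInstance]) ω) ^ 2 ∂P)
            + 2 * ∫ ω, (P[Z i0 i1 | MeasurableSpace.comap (U i0) inferInstance]) ω *
                (P[Z i1 i0 | MeasurableSpace.comap (U i0) inferInstance]) ω ∂P) := by
  obtain rfl : W = hajekTerm P U Z := funext hW
  have h01 : i0 ≠ i1 := fun h => by rw [h, h1] at h0; exact one_ne_zero h0
  have h02 : i0 ≠ i2 := fun h => by rw [h, h2] at h0; exact two_ne_zero h0
  have h12 : i1 ≠ i2 := fun h => by rw [h, h2] at h1; exact OfNat.ofNat_ne_one 2 h1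
  have hM : IsAHKModel P (P.map (U i0)) (P.map (V (edge h01))) U V :=
    ⟨hU, hV, fun i => (hUid i i0).map_eq, fun e => (hVid e _).map_eq, hindep⟩
  have hZ : IsDyadicArray U V τ Z := hZ
  have hZL2 : ∀ i j, i ≠ j → MemLp (Z i j) 2 P := fun i j h =>
    (hZ.identDistrib hM hτ h01 h).memLp_iff.mp hL2
  have hZmean : ∀ i j, i ≠ j → ∫ ω, Z i j ω ∂P = 0 := fun i j h =>
    (hZ.identDistrib hM hτ h01 h).integral_eq.symm.trans hmean
  have hrow := hZ.condExp_ae_eq hM hτ h01 ((hZL2 _ _ h01).integrable one_le_two)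
  have hcol := hZ.condExp_transpose_ae_eq hM hτ h01 ((hZL2 _ _ h01.symm).integrable one_le_two)
  refine ⟨hM.iIndepFun_hajekTerm, ?_⟩
  rw [hZ.variance_sum_hajekTerm hM hτ hZL2 i0, hZ.variance_hajekKernel_add hM hτ hZL2 hZmean h01,
    hZ.integral_mul_row hM hτ hZL2 h01 h02 h12, hZ.integral_mul_col hM hτ hZL2 h01 h02 h12,
    hZ.integral_mul_row_col hM hτ hZL2 h01 h02 h12, Fintype.card_fin]
  simp only [sq]
  rw [integral_mul_congr_ae hrow hrow, integral_mul_congr_ae hcol hcol,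
    integral_mul_congr_ae hrow hcol]
  ring

/-- The Hájek projection terms of a mean-zero AHK dyadic sum are mutually independent,
and the variance of their sum is given by the exact formula below. -/
theorem dyadic_hajek_projection_variance
    {Ω S T : Type*} [MeasurableSpace Ω] [MeasurableSpace S] [MeasurableSpace T]
    (P : Measure Ω) [IsProbabilityMeasure P]
    {n : ℕ} (hn : 3 ≤ n)
    (U : Fin n → Ω → S)
    (V : {e : Sym2 (Fin n) // ¬ e.IsDiag} → Ω → T)
    (hU : ∀ i, Measurable (U i)) (hV : ∀ e, Measurable (V e))
    (hUid : ∀ i j, IdentDistrib (U i) (U j) P P)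
    (hVid : ∀ e e', IdentDistrib (V e) (V e') P P)
    (hindep : iIndep
      (Sum.elim (fun i => MeasurableSpace.comap (U i) inferInstance)
                (fun e => MeasurableSpace.comap (V e) inferInstance)
        : Fin n ⊕ {e : Sym2 (Fin n) // ¬ e.IsDiag} → MeasurableSpace Ω) P)
    (τ : S → S → T → ℝ)
    (hτ : Measurable fun q : S × S × T => τ q.1 q.2.1 q.2.2)
    (Z : Fin n → Fin n → Ω → ℝ)
    (hZ : ∀ i j : Fin n, ∀ hij : i ≠ j,
      Z i j = fun ω => τ (U i ω) (U j ω)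
        (V ⟨Sym2.mk i j, mt Sym2.mk_isDiag_iff.mp hij⟩ ω))
    (i0 i1 i2 : Fin n)
    (h0 : (i0 : ℕ) = 0) (h1 : (i1 : ℕ) = 1) (h2 : (i2 : ℕ) = 2)
    (hmean : ∫ ω, Z i0 i1 ω ∂P = 0)
    (hL2 : MemLp (Z i0 i1) 2 P)
    (W : Fin n → Ω → ℝ)
    (hW : ∀ l : Fin n, W l = fun ω =>
      (∑ j ∈ Finset.univ.erase l,
        (P[Z l j | MeasurableSpace.comap (U l) inferInstance]) ω)
      + ∑ i ∈ Finset.univ.erase l,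
        (P[Z i l | MeasurableSpace.comap (U l) inferInstance]) ω) :
    iIndepFun W P
    ∧ variance (fun ω => ∑ l : Fin n, W l ω) P
      = (n : ℝ) * ((n : ℝ) - 1) * ((n : ℝ) - 2) *
          ((∫ ω, Z i0 i1 ω * Z i0 i2 ω ∂P) + (∫ ω, Z i1 i0 ω * Z i2 i0 ω ∂P)
            + 2 * ∫ ω, Z i0 i1 ω * Z i2 i0 ω ∂P)
        + (n : ℝ) * ((n : ℝ) - 1) *
          ((∫ ω, ((P[Z i0 i1 | MeasurableSpace.comap (U i0) inferInstance]) ω) ^ 2 ∂P)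
            + (∫ ω, ((P[Z i1 i0 | MeasurableSpace.comap (U i0) inferInstance]) ω) ^ 2 ∂P)
            + 2 * ∫ ω, (P[Z i0 i1 | MeasurableSpace.comap (U i0) inferInstance]) ω *
                (P[Z i1 i0 | MeasurableSpace.comap (U i0) inferInstance]) ω ∂P) :=
  dyadic_hajek_projection_variance_general P U V hU hV hUid hVid hindep τ hτ Z hZ i0 i1 i2 h0 h1 h2
    hmean hL2 W hW
end

section
/- Let θ₀ ∈ ℝ, β₀, γ₀ ∈ ℝ^p, and C₁ ≥ 1. Assume: (a) 0 ≤ Y ≤ 1 almost surely; (b) E[ ((D, X)·ξ)⁴ ] ≤ C₁ for every unit vector ξ ∈ ℝ^{p+1}, where (D,X)·ξ := Dξ₁ + ⟨X, (ξ₂,…,ξ_{p+1})⟩; (c) ‖γ₀‖ ≤ C₁. Then there exists a constant C, depending only on C₁, such that for all θ ∈ ℝ and all β, γ ∈ ℝ^p, E[ ( ψ(θ, β, γ) − ψ(θ₀, β₀, γ₀) )² ] ≤ C · ( |θ−θ₀| ∨ ‖β−β₀‖ ∨ ‖γ−γ₀‖ )². -/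
/-!
With `a = Dθ + ⟨X, β⟩` and `s = ⟨X, γ⟩`, the score difference is
`(Λ a₀ - Λ a)(D - s₀) + (Y - Λ a)(s₀ - s)`. As `Λ = sigmoid` is 1-Lipschitz with values in
`[0, 1]` and `0 ≤ Y ≤ 1`, its square is at most `2 (Z₁ Z₂)² + 2 Z₃²`, where `Z₁, Z₂, Z₃` are the
projections of `W = (D, X)` on `(θ - θ₀, β - β₀)`, `(1, -γ₀)` and `(0, γ - γ₀)`. The directional
fourth-moment bound extends from unit vectors by homogeneity, so `E Z₁⁴, E Z₃⁴ = O(r⁴)` and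
`E Z₂⁴ = O(1)`, `r` being the distance of the parameters. The weighted AM–GM inequality
`2ab ≤ a²/r² + r²b²` (in place of Cauchy–Schwarz) turns these into a bound `C r²`.
-/

open MeasureTheory ProbabilityTheory

/-- The logistic function Λ(t) = exp t / (1 + exp t). -/
noncomputable def logistic (t : ℝ) : ℝ := Real.exp t / (1 + Real.exp t)

open scoped RealInnerProductSpace

theorem logistic_eq_sigmoid : logistic = Real.sigmoid := by
  funext t
  rw [logistic, Real.sigmoid_def, Real.exp_neg]
  field_simp
  ring

theorem lipschitzWith_one_sigmoid : LipschitzWith 1 Real.sigmoid := by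
  refine lipschitzWith_of_nnnorm_deriv_le differentiable_sigmoid fun x => ?_
  rw [Real.deriv_sigmoid, ← NNReal.coe_le_coe, coe_nnnorm, Real.norm_eq_abs, NNReal.coe_one,
    abs_le]
  have h₀ := Real.sigmoid_nonneg x
  have h₁ := Real.sigmoid_le_one x
  constructor <;> nlinarith

theorem abs_logistic_sub_le (a b : ℝ) : |logistic a - logistic b| ≤ |a - b| := by
  simpa [logistic_eq_sigmoid, Real.dist_eq] using lipschitzWith_one_sigmoid.dist_le_mul a b

section Score

variable {E : Type*} [NormedAddCommGroup E] [InnerProductSpace ℝ E]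

/-- The score `ψ(θ, β, γ)` evaluated at one observation `(Y, D, X) = (y, d, x)`. -/
noncomputable def logitScore (y d : ℝ) (x : E) (θ : ℝ) (β γ : E) : ℝ :=
  (y - logistic (d * θ + ⟪x, β⟫)) * (d - ⟪x, γ⟫)

theorem sq_logitScore_sub_le {y : ℝ} (hy : 0 ≤ y ∧ y ≤ 1) (d : ℝ) (x : E) (θ θ₀ : ℝ)
    (β β₀ γ γ₀ : E) :
    (logitScore y d x θ β γ - logitScore y d x θ₀ β₀ γ₀) ^ 2
      ≤ 2 * ((d * (θ - θ₀) + ⟪x, β - β₀⟫) * (d - ⟪x, γ₀⟫)) ^ 2 + 2 * ⟪x, γ - γ₀⟫ ^ 2 := by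
  set a := d * θ + ⟪x, β⟫
  set a₀ := d * θ₀ + ⟪x, β₀⟫
  have ha : d * (θ - θ₀) + ⟪x, β - β₀⟫ = a - a₀ := by simp only [a, a₀, inner_sub_right]; ring
  have hγ : ⟪x, γ - γ₀⟫ = ⟪x, γ⟫ - ⟪x, γ₀⟫ := inner_sub_right x γ γ₀
  have hΛ : (logistic a₀ - logistic a) ^ 2 ≤ (a - a₀) ^ 2 := by
    simpa only [sq_abs, abs_sub_comm a₀] using
      pow_le_pow_left₀ (abs_nonneg _) (abs_logistic_sub_le a₀ a) 2
  have hres : (y - logistic a) ^ 2 ≤ 1 := by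
    rw [logistic_eq_sigmoid]
    have := Real.sigmoid_nonneg a
    have := Real.sigmoid_le_one a
    nlinarith
  have hsplit : logitScore y d x θ β γ - logitScore y d x θ₀ β₀ γ₀
      = (logistic a₀ - logistic a) * (d - ⟪x, γ₀⟫) + (y - logistic a) * (⟪x, γ₀⟫ - ⟪x, γ⟫) := by
    simp only [logitScore, a, a₀]; ring
  rw [hsplit, ha, hγ]
  calc _ ≤ 2 * (((logistic a₀ - logistic a) * (d - ⟪x, γ₀⟫)) ^ 2
          + ((y - logistic a) * (⟪x, γ₀⟫ - ⟪x, γ⟫)) ^ 2) := add_sq_le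
    _ = 2 * ((logistic a₀ - logistic a) ^ 2 * (d - ⟪x, γ₀⟫) ^ 2)
          + 2 * ((y - logistic a) ^ 2 * (⟪x, γ⟫ - ⟪x, γ₀⟫) ^ 2) := by ring
    _ ≤ 2 * ((a - a₀) ^ 2 * (d - ⟪x, γ₀⟫) ^ 2) + 2 * (1 * (⟪x, γ⟫ - ⟪x, γ₀⟫) ^ 2) := by
        gcongr
    _ = _ := by ring

end Score

theorem two_mul_le_div_sq_add_sq_mul_sq {a b t : ℝ} (ht : t ≠ 0) :
    2 * a * b ≤ a ^ 2 / t ^ 2 + t ^ 2 * b ^ 2 :=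
  calc 2 * a * b = 2 * (a / t) * (t * b) := by field_simp
    _ ≤ (a / t) ^ 2 + (t * b) ^ 2 := two_mul_le_add_sq _ _
    _ = a ^ 2 / t ^ 2 + t ^ 2 * b ^ 2 := by ring

section FourthMoments

variable {Ω E : Type*} [MeasurableSpace Ω] {P : Measure Ω}
  [NormedAddCommGroup E] [InnerProductSpace ℝ E]

theorem MeasureTheory.MemLp.integrable_pow_four {f : Ω → ℝ} (hf : MemLp f 4 P) :
    Integrable (fun ω => f ω ^ 4) P := by
  simpa [Real.norm_eq_abs, Even.pow_abs (by decide : Even 4)] using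
    hf.integrable_norm_pow (p := 4) (by norm_num)

theorem memLp_inner_and_integral_inner_pow_four_le {V : Ω → E} {C : ℝ}
    (hV : ∀ ξ : E, ‖ξ‖ = 1 →
      MemLp (fun ω => ⟪V ω, ξ⟫) 4 P ∧ ∫ ω, ⟪V ω, ξ⟫ ^ 4 ∂P ≤ C) (ξ : E) :
    MemLp (fun ω => ⟪V ω, ξ⟫) 4 P ∧ ∫ ω, ⟪V ω, ξ⟫ ^ 4 ∂P ≤ ‖ξ‖ ^ 4 * C := by
  rcases eq_or_ne ξ 0 with rfl | hξ
  · simp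
  · obtain ⟨hmem, hint⟩ := hV (‖ξ‖⁻¹ • ξ) (norm_smul_inv_norm hξ)
    have hscale : ∀ ω, ⟪V ω, ξ⟫ = ‖ξ‖ * ⟪V ω, ‖ξ‖⁻¹ • ξ⟫ := fun ω => by
      rw [real_inner_smul_right, mul_inv_cancel_left₀ (norm_ne_zero_iff.2 hξ)]
    simp_rw [hscale, mul_pow]
    refine ⟨hmem.const_mul _, ?_⟩
    rw [integral_const_mul]
    gcongr

theorem integral_sq_le_of_sq_le_two_mul_sq_add [IsProbabilityMeasure P] {f Z₁ Z₂ Z₃ : Ω → ℝ}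
    (h₁ : MemLp Z₁ 4 P) (h₂ : MemLp Z₂ 4 P) (h₃ : MemLp Z₃ 4 P)
    (hf : ∀ᵐ ω ∂P, f ω ^ 2 ≤ 2 * (Z₁ ω * Z₂ ω) ^ 2 + 2 * Z₃ ω ^ 2) {r : ℝ} (hr : r ≠ 0) :
    ∫ ω, f ω ^ 2 ∂P
      ≤ (∫ ω, Z₁ ω ^ 4 ∂P + ∫ ω, Z₃ ω ^ 4 ∂P) / r ^ 2 + r ^ 2 * (∫ ω, Z₂ ω ^ 4 ∂P + 1) := by
  have hi₁ := h₁.integrable_pow_four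
  have hi₂ := h₂.integrable_pow_four
  have hi₃ := h₃.integrable_pow_four
  have hbound : ∀ ω, 2 * (Z₁ ω * Z₂ ω) ^ 2 + 2 * Z₃ ω ^ 2
      ≤ (Z₁ ω ^ 4 + Z₃ ω ^ 4) / r ^ 2 + r ^ 2 * (Z₂ ω ^ 4 + 1) := fun ω =>
    calc 2 * (Z₁ ω * Z₂ ω) ^ 2 + 2 * Z₃ ω ^ 2 = 2 * Z₁ ω ^ 2 * Z₂ ω ^ 2 + 2 * Z₃ ω ^ 2 * 1 := by
          ring
      _ ≤ ((Z₁ ω ^ 2) ^ 2 / r ^ 2 + r ^ 2 * (Z₂ ω ^ 2) ^ 2)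
            + ((Z₃ ω ^ 2) ^ 2 / r ^ 2 + r ^ 2 * 1 ^ 2) :=
          add_le_add (two_mul_le_div_sq_add_sq_mul_sq hr) (two_mul_le_div_sq_add_sq_mul_sq hr)
      _ = _ := by ring
  have hint : Integrable (fun ω => (Z₁ ω ^ 4 + Z₃ ω ^ 4) / r ^ 2 + r ^ 2 * (Z₂ ω ^ 4 + 1)) P := by
    fun_prop
  calc ∫ ω, f ω ^ 2 ∂P
      ≤ ∫ ω, ((Z₁ ω ^ 4 + Z₃ ω ^ 4) / r ^ 2 + r ^ 2 * (Z₂ ω ^ 4 + 1)) ∂P := by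
        refine integral_mono_of_nonneg (.of_forall fun ω => sq_nonneg _) hint ?_
        filter_upwards [hf] with ω hω using hω.trans (hbound ω)
    _ = _ := by
        rw [integral_add (by fun_prop) (by fun_prop), integral_div, integral_const_mul,
          integral_add hi₁ hi₃, integral_add hi₂ (integrable_const 1)]
        simp

end FourthMoments

noncomputable def euclideanCons {p : ℕ} (t : ℝ) (v : EuclideanSpace ℝ (Fin p)) :
    EuclideanSpace ℝ (Fin (p + 1)) :=
  WithLp.toLp 2 (Fin.cons t v.ofLp)

theorem inner_euclideanCons {p : ℕ} (t : ℝ) (v : EuclideanSpace ℝ (Fin p))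
    (ξ : EuclideanSpace ℝ (Fin (p + 1))) :
    ⟪euclideanCons t v, ξ⟫ = t * ξ 0 + ∑ l, v l * ξ l.succ := by
  simp [euclideanCons, PiLp.inner_apply, Fin.sum_univ_succ, mul_comm]

theorem inner_euclideanCons_euclideanCons {p : ℕ} (t s : ℝ) (v w : EuclideanSpace ℝ (Fin p)) :
    ⟪euclideanCons t v, euclideanCons s w⟫ = t * s + ⟪v, w⟫ := by
  rw [inner_euclideanCons]
  simp [euclideanCons, PiLp.inner_apply, mul_comm]

theorem norm_euclideanCons_sq {p : ℕ} (t : ℝ) (v : EuclideanSpace ℝ (Fin p)) :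
    ‖euclideanCons t v‖ ^ 2 = t ^ 2 + ‖v‖ ^ 2 := by
  rw [← real_inner_self_eq_norm_sq, inner_euclideanCons_euclideanCons, real_inner_self_eq_norm_sq,
    ← sq]

theorem logitScore_euclideanSpace {p : ℕ} (y d : ℝ) (x : EuclideanSpace ℝ (Fin p)) (θ : ℝ)
    (β γ : EuclideanSpace ℝ (Fin p)) :
    logitScore y d x θ β γ
      = (y - logistic (d * θ + ∑ l, x l * β l)) * (d - ∑ l, x l * γ l) := by
  simp [logitScore, PiLp.inner_apply, mul_comm]

theorem integral_sq_logitScore_sub_le {Ω : Type*} [MeasurableSpace Ω] {P : Measure Ω}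
    [IsProbabilityMeasure P] {p : ℕ} {Y D : Ω → ℝ} {X : Ω → EuclideanSpace ℝ (Fin p)}
    (hY : ∀ᵐ ω ∂P, 0 ≤ Y ω ∧ Y ω ≤ 1) {C₁ : ℝ} (hC₁ : 0 ≤ C₁)
    (hmom : ∀ ξ : EuclideanSpace ℝ (Fin (p + 1)),
      MemLp (fun ω => ⟪euclideanCons (D ω) (X ω), ξ⟫) 4 P ∧
      ∫ ω, ⟪euclideanCons (D ω) (X ω), ξ⟫ ^ 4 ∂P ≤ ‖ξ‖ ^ 4 * C₁)
    {θ θ₀ : ℝ} {β β₀ γ γ₀ : EuclideanSpace ℝ (Fin p)} (hγ₀ : ‖γ₀‖ ≤ C₁) {r : ℝ} (hr : 0 < r)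
    (hθ : |θ - θ₀| ≤ r) (hβ : ‖β - β₀‖ ≤ r) (hγ : ‖γ - γ₀‖ ≤ r) :
    ∫ ω, (logitScore (Y ω) (D ω) (X ω) θ β γ - logitScore (Y ω) (D ω) (X ω) θ₀ β₀ γ₀) ^ 2 ∂P
      ≤ (5 * C₁ + (1 + C₁ ^ 2) ^ 2 * C₁ + 1) * r ^ 2 := by
  obtain ⟨h₁, m₁⟩ := hmom (euclideanCons (θ - θ₀) (β - β₀))
  obtain ⟨h₂, m₂⟩ := hmom (euclideanCons 1 (-γ₀))
  obtain ⟨h₃, m₃⟩ := hmom (euclideanCons 0 (γ - γ₀))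
  have n₁ : ‖euclideanCons (θ - θ₀) (β - β₀)‖ ^ 4 ≤ 4 * r ^ 4 := by
    have : ‖euclideanCons (θ - θ₀) (β - β₀)‖ ^ 2 ≤ 2 * r ^ 2 := by
      rw [norm_euclideanCons_sq, ← sq_abs]
      nlinarith [abs_nonneg (θ - θ₀), norm_nonneg (β - β₀)]
    nlinarith [sq_nonneg ‖euclideanCons (θ - θ₀) (β - β₀)‖]
  have n₂ : ‖euclideanCons 1 (-γ₀)‖ ^ 4 ≤ (1 + C₁ ^ 2) ^ 2 := by
    have : ‖euclideanCons 1 (-γ₀)‖ ^ 2 ≤ 1 + C₁ ^ 2 := by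
      rw [norm_euclideanCons_sq, norm_neg]
      nlinarith [norm_nonneg γ₀]
    nlinarith [sq_nonneg ‖euclideanCons 1 (-γ₀)‖]
  have n₃ : ‖euclideanCons 0 (γ - γ₀)‖ ^ 4 ≤ r ^ 4 := by
    have : ‖euclideanCons 0 (γ - γ₀)‖ = ‖γ - γ₀‖ := by
      rw [← sq_eq_sq₀ (norm_nonneg _) (norm_nonneg _), norm_euclideanCons_sq, zero_pow two_ne_zero,
        zero_add]
    rw [this]
    gcongr
  have hpt : ∀ᵐ ω ∂P,
      (logitScore (Y ω) (D ω) (X ω) θ β γ - logitScore (Y ω) (D ω) (X ω) θ₀ β₀ γ₀) ^ 2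
        ≤ 2 * (⟪euclideanCons (D ω) (X ω), euclideanCons (θ - θ₀) (β - β₀)⟫
            * ⟪euclideanCons (D ω) (X ω), euclideanCons 1 (-γ₀)⟫) ^ 2
          + 2 * ⟪euclideanCons (D ω) (X ω), euclideanCons 0 (γ - γ₀)⟫ ^ 2 := by
    filter_upwards [hY] with ω hYω
    simp only [inner_euclideanCons_euclideanCons, mul_one, mul_zero, zero_add, inner_neg_right,
      ← sub_eq_add_neg]
    exact sq_logitScore_sub_le hYω (D ω) (X ω) θ θ₀ β β₀ γ γ₀
  calc _ ≤ _ := integral_sq_le_of_sq_le_two_mul_sq_add h₁ h₂ h₃ hpt hr.ne'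
    _ ≤ (‖euclideanCons (θ - θ₀) (β - β₀)‖ ^ 4 * C₁ + ‖euclideanCons 0 (γ - γ₀)‖ ^ 4 * C₁) / r ^ 2
          + r ^ 2 * (‖euclideanCons 1 (-γ₀)‖ ^ 4 * C₁ + 1) := by gcongr
    _ ≤ (4 * r ^ 4 * C₁ + r ^ 4 * C₁) / r ^ 2 + r ^ 2 * ((1 + C₁ ^ 2) ^ 2 * C₁ + 1) := by gcongr
    _ = (5 * C₁ + (1 + C₁ ^ 2) ^ 2 * C₁ + 1) * r ^ 2 := by field_simp; ring

theorem logit_score_mean_square_continuity_general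
    {Ω : Type*} [MeasurableSpace Ω] (P : Measure Ω) [IsProbabilityMeasure P]
    {p : ℕ} (Y D : Ω → ℝ) (X : Ω → EuclideanSpace ℝ (Fin p))
    (θ₀ : ℝ) (β₀ γ₀ : EuclideanSpace ℝ (Fin p)) (C₁ : ℝ) (hC₁ : 1 ≤ C₁)
    (hYb : ∀ᵐ ω ∂P, 0 ≤ Y ω ∧ Y ω ≤ 1)
    (hmom : ∀ ξ : EuclideanSpace ℝ (Fin (p + 1)), ‖ξ‖ = 1 →
      MemLp (fun ω => D ω * ξ 0 + ∑ l : Fin p, X ω l * ξ l.succ) 4 P ∧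
      ∫ ω, (D ω * ξ 0 + ∑ l : Fin p, X ω l * ξ l.succ) ^ 4 ∂P ≤ C₁)
    (hγ₀ : ‖γ₀‖ ≤ C₁) :
    ∃ C : ℝ, 0 < C ∧ ∀ (θ : ℝ) (β γ : EuclideanSpace ℝ (Fin p)),
      ∫ ω, ((Y ω - logistic (D ω * θ + ∑ l, X ω l * β l)) *
              (D ω - ∑ l, X ω l * γ l)
            - (Y ω - logistic (D ω * θ₀ + ∑ l, X ω l * β₀ l)) *
              (D ω - ∑ l, X ω l * γ₀ l)) ^ 2 ∂P
        ≤ C * (max |θ - θ₀| (max ‖β - β₀‖ ‖γ - γ₀‖)) ^ 2 := by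
  have hC₁_nonneg : 0 ≤ C₁ := by linarith
  have hW := memLp_inner_and_integral_inner_pow_four_le
    (V := fun ω => euclideanCons (D ω) (X ω)) (by simpa only [inner_euclideanCons] using hmom)
  refine ⟨5 * C₁ + (1 + C₁ ^ 2) ^ 2 * C₁ + 1, by positivity, fun θ β γ => ?_⟩
  simp_rw [← logitScore_euclideanSpace]
  set r := max |θ - θ₀| (max ‖β - β₀‖ ‖γ - γ₀‖)
  rcases (show 0 ≤ r by positivity).eq_or_lt with hr | hr
  · obtain ⟨rfl, rfl, rfl⟩ : θ = θ₀ ∧ β = β₀ ∧ γ = γ₀ := by simpa [r, sub_eq_zero] using hr.ge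
    simp only [sub_self, ne_eq, OfNat.ofNat_ne_zero, not_false_eq_true, zero_pow, integral_zero]
    positivity
  · exact integral_sq_logitScore_sub_le hYb hC₁_nonneg hW hγ₀ hr (le_max_left _ _)
      ((le_max_left _ _).trans (le_max_right _ _)) ((le_max_right _ _).trans (le_max_right _ _))

/-- Mean-square continuity of the logistic dyadic link formation score in the
parameters (θ, β, γ), with a constant depending only on C₁. -/
theorem logit_score_mean_square_continuity
    {Ω : Type*} [MeasurableSpace Ω] (P : Measure Ω) [IsProbabilityMeasure P]
    {p : ℕ} (Y D : Ω → ℝ) (X : Ω → EuclideanSpace ℝ (Fin p))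
    (hY : Measurable Y) (hD : Measurable D) (hX : Measurable X)
    (θ₀ : ℝ) (β₀ γ₀ : EuclideanSpace ℝ (Fin p)) (C₁ : ℝ) (hC₁ : 1 ≤ C₁)
    (hYb : ∀ᵐ ω ∂P, 0 ≤ Y ω ∧ Y ω ≤ 1)
    (hmom : ∀ ξ : EuclideanSpace ℝ (Fin (p + 1)), ‖ξ‖ = 1 →
      MemLp (fun ω => D ω * ξ 0 + ∑ l : Fin p, X ω l * ξ l.succ) 4 P ∧
      ∫ ω, (D ω * ξ 0 + ∑ l : Fin p, X ω l * ξ l.succ) ^ 4 ∂P ≤ C₁)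
    (hγ₀ : ‖γ₀‖ ≤ C₁) :
    ∃ C : ℝ, 0 < C ∧ ∀ (θ : ℝ) (β γ : EuclideanSpace ℝ (Fin p)),
      ∫ ω, ((Y ω - logistic (D ω * θ + ∑ l, X ω l * β l)) *
              (D ω - ∑ l, X ω l * γ l)
            - (Y ω - logistic (D ω * θ₀ + ∑ l, X ω l * β₀ l)) *
              (D ω - ∑ l, X ω l * γ₀ l)) ^ 2 ∂P
        ≤ C * (max |θ - θ₀| (max ‖β - β₀‖ ‖γ - γ₀‖)) ^ 2 :=
  logit_score_mean_square_continuity_general P Y D X θ₀ β₀ γ₀ C₁ hC₁ hYb hmom hγ₀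
end
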